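/- Extension of n copies by n maximally mixed states: for every N×N density matrix ρ (N ≥ 2) and every n ≥ 1, the quantum statistical complexity of the N^{2n}-dimensional density matrix ρ^⊗n ⊗ (I/N)^⊗n satisfies C(ρ^⊗n ⊗ (I/N)^⊗n) ≤ n·(C(ρ)/2 + 1/2), where ρ^⊗n denotes the n-fold Kronecker product and (I/N)^⊗n the n-fold Kronecker product of the normalized N×N identity matrix. -/

import Mathlib

/-
Write M = N^n and τ = ρ^⊗n. The spectrum of τ ⊗ I/M is that of τ scaled by 1/M, each eigenvalue
repeated M times, so its entropy is S(τ) + log M, its disequilibrium is D(τ), and its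
normalisation is log M² = 2 log M; hence C(τ ⊗ I/M) = C(τ)/2 + D(τ)/2. For a state D ≤ 1, and
S(τ) ≤ log M gives C(τ) ≤ 1. For n = 1, τ is ρ up to relabelling and the bound is C(ρ)/2 + 1/2;
for n ≥ 2 the left side is at most 1 ≤ n/2.

Spectra are compared through characteristic polynomials: a Hermitian matrix whose charpoly is
∏ (X - dᵢ) has the dᵢ as its eigenvalues, counted with multiplicity.
-/

open Matrix BigOperators Kronecker ComplexOrder

noncomputable def vNEntropy {m : Type*} [Fintype m] [DecidableEq m]
    (ρ : Matrix m m ℂ) : ℝ :=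
  if h : ρ.IsHermitian then -∑ i, h.eigenvalues i * Real.log (h.eigenvalues i) else 0

noncomputable def traceNorm {m : Type*} [Fintype m] [DecidableEq m]
    (A : Matrix m m ℂ) : ℝ :=
  if h : A.IsHermitian then ∑ i, |h.eigenvalues i| else 0

noncomputable def mmix (m : Type*) [Fintype m] [DecidableEq m] : Matrix m m ℂ :=
  ((Fintype.card m : ℂ))⁻¹ • 1

noncomputable def diseq {m : Type*} [Fintype m] [DecidableEq m]
    (ρ : Matrix m m ℂ) : ℝ := (1/2) * traceNorm (ρ - mmix m)

noncomputable def qscm {m : Type*} [Fintype m] [DecidableEq m]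
    (ρ : Matrix m m ℂ) : ℝ :=
  vNEntropy ρ * diseq ρ / Real.log (Fintype.card m)

noncomputable def kronPow {N : ℕ} (ρ : Matrix (Fin N) (Fin N) ℂ) (n : ℕ) :
    Matrix (Fin n → Fin N) (Fin n → Fin N) ℂ :=
  fun x y => ∏ i, ρ (x i) (y i)

open Polynomial

theorem Real.sum_negMulLog_le_log_card {ι : Type*} [Fintype ι] {p : ι → ℝ} (hp0 : ∀ i, 0 ≤ p i)
    (hp1 : ∑ i, p i = 1) : ∑ i, negMulLog (p i) ≤ log (Fintype.card ι) := by
  have : Nonempty ι := by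
    by_contra h
    simp [not_nonempty_iff.mp h] at hp1
  have hK : (0 : ℝ) < Fintype.card ι := by positivity
  have jensen := concaveOn_negMulLog.le_map_sum (t := Finset.univ)
    (w := fun _ => (Fintype.card ι : ℝ)⁻¹) (p := p) (fun _ _ => by positivity)
    (by simp) (fun i _ => Set.mem_Ici.mpr (hp0 i))
  simp only [smul_eq_mul, ← Finset.mul_sum, hp1, mul_one, negMulLog, log_inv] at jensen
  field_simp at jensen
  simpa [negMulLog] using jensen

theorem Matrix.IsHermitian.sum_eigenvalues_eq_of_charpoly_eq_prod {m ι : Type*} [Fintype m]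
    [DecidableEq m] [Fintype ι] {A : Matrix m m ℂ} (hA : A.IsHermitian) {d : ι → ℝ}
    (h : A.charpoly = ∏ i, (X - C (d i : ℂ))) (f : ℝ → ℝ) :
    ∑ i, f (hA.eigenvalues i) = ∑ i, f (d i) := by
  have hroots : Finset.univ.val.map (fun i => (hA.eigenvalues i : ℂ)) =
      Finset.univ.val.map (fun i => (d i : ℂ)) := by
    have hd : (∏ i, (X - C (d i : ℂ))).roots = Finset.univ.val.map (fun i => (d i : ℂ)) := by
      rw [roots_prod _ _ (Finset.prod_ne_zero_iff.mpr fun i _ => X_sub_C_ne_zero _)]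
      simp
    rw [← hd, ← h, hA.roots_charpoly_eq_eigenvalues]
    rfl
  have := congrArg (fun s => (s.map (f ∘ Complex.re)).sum) hroots
  simp only [Multiset.map_map, Function.comp_def, Complex.ofReal_re] at this
  rwa [Finset.sum_eq_multiset_sum, Finset.sum_eq_multiset_sum]

theorem Matrix.charpoly_unitary_conj_diagonal {m : Type*} [Fintype m] [DecidableEq m]
    {U : Matrix m m ℂ} (hU : U ∈ unitary (Matrix m m ℂ)) (d : m → ℂ) :
    (U * diagonal d * star U).charpoly = ∏ i, (X - C (d i)) := by
  rw [Matrix.mul_assoc, charpoly_mul_comm, Matrix.mul_assoc, Unitary.star_mul_self_of_mem hU,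
    Matrix.mul_one, charpoly_diagonal]

theorem Matrix.IsHermitian.eq_unitary_conj_diagonal {m : Type*} [Fintype m] [DecidableEq m]
    {A : Matrix m m ℂ} (hA : A.IsHermitian) :
    A = (hA.eigenvectorUnitary : Matrix m m ℂ) * diagonal (fun i => (hA.eigenvalues i : ℂ)) *
      star (hA.eigenvectorUnitary : Matrix m m ℂ) := by
  conv_lhs => rw [hA.spectral_theorem, Unitary.conjStarAlgAut_apply]
  rfl

theorem Matrix.IsHermitian.charpoly_kronecker_smul_one {m k : Type*} [Fintype m] [DecidableEq m]
    [Fintype k] [DecidableEq k] {A : Matrix m m ℂ} (hA : A.IsHermitian) (c : ℝ) :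
    (A ⊗ₖ ((c : ℂ) • (1 : Matrix k k ℂ))).charpoly =
      ∏ p : m × k, (X - C ((hA.eigenvalues p.1 * c : ℝ) : ℂ)) := by
  have hA' := hA.eq_unitary_conj_diagonal
  set U : Matrix m m ℂ := (hA.eigenvectorUnitary : Matrix m m ℂ)
  have hUk : U ⊗ₖ (1 : Matrix k k ℂ) ∈ unitary _ :=
    kronecker_mem_unitary hA.eigenvectorUnitary.2 (one_mem _)
  have hdiag : A ⊗ₖ ((c : ℂ) • (1 : Matrix k k ℂ)) = (U ⊗ₖ 1) *
      diagonal (fun p : m × k => ((hA.eigenvalues p.1 * c : ℝ) : ℂ)) * star (U ⊗ₖ 1) := by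
    have hD : diagonal (fun p : m × k => ((hA.eigenvalues p.1 * c : ℝ) : ℂ)) =
        diagonal (fun i => (hA.eigenvalues i : ℂ)) ⊗ₖ ((c : ℂ) • (1 : Matrix k k ℂ)) := by
      rw [← diagonal_one, ← diagonal_smul, diagonal_kronecker_diagonal]
      simp
    rw [hD, star_eq_conjTranspose, conjTranspose_kronecker, conjTranspose_one,
      ← mul_kronecker_mul, ← mul_kronecker_mul, Matrix.one_mul, Matrix.mul_one,
      ← star_eq_conjTranspose, ← hA']
  rw [hdiag, charpoly_unitary_conj_diagonal hUk]

theorem Matrix.IsHermitian.charpoly_sub_smul_one {m : Type*} [Fintype m] [DecidableEq m]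
    {A : Matrix m m ℂ} (hA : A.IsHermitian) (c : ℝ) :
    (A - (c : ℂ) • (1 : Matrix m m ℂ)).charpoly =
      ∏ i, (X - C ((hA.eigenvalues i - c : ℝ) : ℂ)) := by
  have hA' := hA.eq_unitary_conj_diagonal
  set U : Matrix m m ℂ := (hA.eigenvectorUnitary : Matrix m m ℂ)
  have hU : U * star U = 1 := Unitary.mul_star_self_of_mem hA.eigenvectorUnitary.2
  have hdiag : A - (c : ℂ) • (1 : Matrix m m ℂ) =
      U * diagonal (fun i => ((hA.eigenvalues i - c : ℝ) : ℂ)) * star U := by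
    have hsplit : diagonal (fun i => ((hA.eigenvalues i - c : ℝ) : ℂ)) =
        diagonal (fun i => (hA.eigenvalues i : ℂ)) - (c : ℂ) • 1 := by
      rw [← diagonal_one, ← diagonal_smul, diagonal_sub]
      simp
    rw [hsplit, Matrix.mul_sub, Matrix.sub_mul, Matrix.mul_smul, Matrix.smul_mul, Matrix.mul_one,
      hU, ← hA']
  rw [hdiag, charpoly_unitary_conj_diagonal hA.eigenvectorUnitary.2]

theorem Matrix.IsHermitian.kronecker {m k : Type*} {A : Matrix m m ℂ} {B : Matrix k k ℂ}
    (hA : A.IsHermitian) (hB : B.IsHermitian) : (A ⊗ₖ B).IsHermitian := by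
  rw [IsHermitian, conjTranspose_kronecker, hA.eq, hB.eq]

theorem mmix_eq_ofReal_smul_one (k : Type*) [Fintype k] [DecidableEq k] :
    mmix k = (((Fintype.card k : ℝ)⁻¹ : ℝ) : ℂ) • (1 : Matrix k k ℂ) := by
  simp [mmix]

theorem isHermitian_mmix (k : Type*) [Fintype k] [DecidableEq k] : (mmix k).IsHermitian := by
  rw [mmix_eq_ofReal_smul_one]
  exact isHermitian_one.smul (Complex.conj_ofReal _)

theorem mmix_prod (m k : Type*) [Fintype m] [DecidableEq m] [Fintype k] [DecidableEq k] :
    mmix (m × k) = mmix m ⊗ₖ mmix k := by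
  simp only [mmix, smul_kronecker, kronecker_smul, one_kronecker_one, Fintype.card_prod, smul_smul,
    Nat.cast_mul, mul_inv]
  rw [mul_comm]

theorem Matrix.IsHermitian.sum_eigenvalues_kronecker_mmix {m k : Type*} [Fintype m]
    [DecidableEq m] [Fintype k] [DecidableEq k] {A : Matrix m m ℂ} (hA : A.IsHermitian)
    (f : ℝ → ℝ) :
    ∑ p, f ((hA.kronecker (isHermitian_mmix k)).eigenvalues p) =
      Fintype.card k * ∑ i, f (hA.eigenvalues i / Fintype.card k) := by
  rw [sum_eigenvalues_eq_of_charpoly_eq_prod _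
    (by rw [mmix_eq_ofReal_smul_one, hA.charpoly_kronecker_smul_one]), Fintype.sum_prod_type,
    Finset.mul_sum]
  simp [div_eq_mul_inv]

theorem Matrix.IsHermitian.vNEntropy_eq_sum_negMulLog {m : Type*} [Fintype m] [DecidableEq m]
    {A : Matrix m m ℂ} (hA : A.IsHermitian) :
    vNEntropy A = ∑ i, Real.negMulLog (hA.eigenvalues i) := by
  simp [vNEntropy, hA, Real.negMulLog_eq_neg]

theorem Matrix.IsHermitian.traceNorm_eq_sum_abs {m : Type*} [Fintype m] [DecidableEq m]
    {A : Matrix m m ℂ} (hA : A.IsHermitian) : traceNorm A = ∑ i, |hA.eigenvalues i| := by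
  rw [traceNorm, dif_pos hA]

theorem Matrix.IsHermitian.sum_eigenvalues_eq_one {m : Type*} [Fintype m] [DecidableEq m]
    {A : Matrix m m ℂ} (hA : A.IsHermitian) (htr : A.trace = 1) : ∑ i, hA.eigenvalues i = 1 := by
  have := congrArg Complex.re hA.trace_eq_sum_eigenvalues
  simpa [htr] using this.symm

theorem vNEntropy_kronecker_mmix {m k : Type*} [Fintype m] [DecidableEq m] [Fintype k]
    [DecidableEq k] [Nonempty k] {A : Matrix m m ℂ} (hA : A.IsHermitian) (htr : A.trace = 1) :
    vNEntropy (A ⊗ₖ mmix k) = vNEntropy A + Real.log (Fintype.card k) := by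
  have hK : (Fintype.card k : ℝ) ≠ 0 := by positivity
  rw [(hA.kronecker (isHermitian_mmix k)).vNEntropy_eq_sum_negMulLog,
    hA.sum_eigenvalues_kronecker_mmix, hA.vNEntropy_eq_sum_negMulLog]
  simp_rw [div_eq_mul_inv, Real.negMulLog_mul, Finset.sum_add_distrib, ← Finset.sum_mul,
    ← Finset.mul_sum, hA.sum_eigenvalues_eq_one htr, Real.negMulLog, Real.log_inv]
  field_simp

theorem traceNorm_kronecker_mmix {m k : Type*} [Fintype m] [DecidableEq m] [Fintype k]
    [DecidableEq k] [Nonempty k] {A : Matrix m m ℂ} (hA : A.IsHermitian) :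
    traceNorm (A ⊗ₖ mmix k) = traceNorm A := by
  have hK : (0 : ℝ) < Fintype.card k := by positivity
  rw [(hA.kronecker (isHermitian_mmix k)).traceNorm_eq_sum_abs,
    hA.sum_eigenvalues_kronecker_mmix, hA.traceNorm_eq_sum_abs]
  simp_rw [abs_div, abs_of_pos hK, ← Finset.sum_div]
  field_simp

theorem diseq_kronecker_mmix {m k : Type*} [Fintype m] [DecidableEq m] [Fintype k]
    [DecidableEq k] [Nonempty k] {A : Matrix m m ℂ} (hA : A.IsHermitian) :
    diseq (A ⊗ₖ mmix k) = diseq A := by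
  have hsub : A ⊗ₖ mmix k - mmix (m × k) = (A - mmix m) ⊗ₖ mmix k := by
    ext
    simp [mmix_prod, sub_mul]
  rw [diseq, diseq, hsub, traceNorm_kronecker_mmix (hA.sub (isHermitian_mmix m))]

theorem Matrix.IsHermitian.diseq_eq {m : Type*} [Fintype m] [DecidableEq m] {A : Matrix m m ℂ}
    (hA : A.IsHermitian) :
    diseq A = (1 / 2) * ∑ i, |hA.eigenvalues i - (Fintype.card m : ℝ)⁻¹| := by
  rw [diseq, (hA.sub (isHermitian_mmix m)).traceNorm_eq_sum_abs,
    sum_eigenvalues_eq_of_charpoly_eq_prod _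
      (by rw [mmix_eq_ofReal_smul_one, hA.charpoly_sub_smul_one])]

theorem Matrix.IsHermitian.sum_eigenvalues_submatrix_equiv {m m' : Type*} [Fintype m]
    [DecidableEq m] [Fintype m'] [DecidableEq m'] {A : Matrix m m ℂ} (hA : A.IsHermitian)
    (e : m' ≃ m) (f : ℝ → ℝ) :
    ∑ i, f ((hA.submatrix e).eigenvalues i) = ∑ i, f (hA.eigenvalues i) := by
  refine sum_eigenvalues_eq_of_charpoly_eq_prod _ ?_ f
  change (Matrix.reindex e.symm e.symm A).charpoly = _
  rw [charpoly_reindex, hA.charpoly_eq]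
  rfl

theorem traceNorm_nonneg {m : Type*} [Fintype m] [DecidableEq m] (A : Matrix m m ℂ) :
    0 ≤ traceNorm A := by
  unfold traceNorm
  split_ifs <;> positivity

theorem diseq_nonneg {m : Type*} [Fintype m] [DecidableEq m] (A : Matrix m m ℂ) :
    0 ≤ diseq A :=
  mul_nonneg (by norm_num) (traceNorm_nonneg _)

theorem qscm_submatrix_equiv {m m' : Type*} [Fintype m] [DecidableEq m] [Fintype m']
    [DecidableEq m'] {A : Matrix m m ℂ} (hA : A.IsHermitian) (e : m' ≃ m) :
    qscm (A.submatrix e e) = qscm A := by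
  have hcard : Fintype.card m' = Fintype.card m := Fintype.card_congr e
  have hmmix : mmix m' = (mmix m).submatrix e e := by
    ext i j
    simp [mmix, one_apply, hcard]
  have hsub : A.submatrix e e - mmix m' = (A - mmix m).submatrix e e := by
    ext
    simp [hmmix]
  have hD := (hA.sub (isHermitian_mmix m)).sum_eigenvalues_submatrix_equiv e abs
  rw [qscm, qscm, (hA.submatrix e).vNEntropy_eq_sum_negMulLog, hA.vNEntropy_eq_sum_negMulLog,
    hA.sum_eigenvalues_submatrix_equiv, diseq, diseq, hsub, hcard,
    ((hA.sub (isHermitian_mmix m)).submatrix e).traceNorm_eq_sum_abs, hD,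
    (hA.sub (isHermitian_mmix m)).traceNorm_eq_sum_abs]

section DensityMatrix

variable {m : Type*} [Fintype m] [DecidableEq m] {ρ : Matrix m m ℂ}

theorem vNEntropy_nonneg (hρ : ρ.PosSemidef) (htr : ρ.trace = 1) : 0 ≤ vNEntropy ρ := by
  rw [hρ.1.vNEntropy_eq_sum_negMulLog]
  refine Finset.sum_nonneg fun i _ => Real.negMulLog_nonneg (hρ.eigenvalues_nonneg i) ?_
  rw [← hρ.1.sum_eigenvalues_eq_one htr]
  exact Finset.single_le_sum (fun j _ => hρ.eigenvalues_nonneg j) (Finset.mem_univ i)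

theorem vNEntropy_le_log_card (hρ : ρ.PosSemidef) (htr : ρ.trace = 1) :
    vNEntropy ρ ≤ Real.log (Fintype.card m) := by
  rw [hρ.1.vNEntropy_eq_sum_negMulLog]
  exact Real.sum_negMulLog_le_log_card hρ.eigenvalues_nonneg (hρ.1.sum_eigenvalues_eq_one htr)

theorem diseq_le_one (hρ : ρ.PosSemidef) (htr : ρ.trace = 1) : diseq ρ ≤ 1 := by
  have hK : (Fintype.card m : ℝ) * (Fintype.card m : ℝ)⁻¹ ≤ 1 := by
    rcases eq_or_ne (Fintype.card m : ℝ) 0 with h | h <;> simp [h]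
  have htri : ∑ i, |hρ.1.eigenvalues i - (Fintype.card m : ℝ)⁻¹| ≤
      ∑ i, (hρ.1.eigenvalues i + (Fintype.card m : ℝ)⁻¹) :=
    Finset.sum_le_sum fun i _ => (abs_sub _ _).trans_eq (by
      rw [abs_of_nonneg (hρ.eigenvalues_nonneg i), abs_of_nonneg (by positivity)])
  rw [Finset.sum_add_distrib, hρ.1.sum_eigenvalues_eq_one htr, Finset.sum_const,
    Finset.card_univ, nsmul_eq_mul] at htri
  rw [hρ.1.diseq_eq]
  linarith

theorem qscm_nonneg (hρ : ρ.PosSemidef) (htr : ρ.trace = 1) : 0 ≤ qscm ρ :=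
  div_nonneg (mul_nonneg (vNEntropy_nonneg hρ htr) (diseq_nonneg ρ)) (Real.log_natCast_nonneg _)

theorem qscm_le_one (hρ : ρ.PosSemidef) (htr : ρ.trace = 1) : qscm ρ ≤ 1 := by
  refine div_le_one_of_le₀ ?_ (Real.log_natCast_nonneg _)
  simpa using mul_le_mul (vNEntropy_le_log_card hρ htr) (diseq_le_one hρ htr)
    (diseq_nonneg ρ) (Real.log_natCast_nonneg _)

theorem qscm_kronecker_mmix_self [Nontrivial m] (hρ : ρ.IsHermitian) (htr : ρ.trace = 1) :
    qscm (ρ ⊗ₖ mmix m) = qscm ρ / 2 + diseq ρ / 2 := by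
  have hK : (1 : ℝ) < Fintype.card m := by exact_mod_cast Fintype.one_lt_card
  have hL : 0 < Real.log (Fintype.card m) := Real.log_pos hK
  rw [qscm, qscm, vNEntropy_kronecker_mmix hρ htr, diseq_kronecker_mmix hρ, Fintype.card_prod,
    Nat.cast_mul, Real.log_mul (by positivity) (by positivity)]
  field_simp
  ring

end DensityMatrix

section KronPow

variable {N : ℕ}

theorem kronPow_mul (A B : Matrix (Fin N) (Fin N) ℂ) (n : ℕ) :
    kronPow (A * B) n = kronPow A n * kronPow B n := by
  ext x y
  simp only [kronPow, mul_apply, Finset.prod_univ_sum, Fintype.piFinset_univ,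
    Finset.prod_mul_distrib]

theorem kronPow_conjTranspose (A : Matrix (Fin N) (Fin N) ℂ) (n : ℕ) :
    kronPow Aᴴ n = (kronPow A n)ᴴ := by
  ext x y
  simp [kronPow, conjTranspose_apply]

theorem Matrix.PosSemidef.kronPow {ρ : Matrix (Fin N) (Fin N) ℂ} (hρ : ρ.PosSemidef) (n : ℕ) :
    (kronPow ρ n).PosSemidef := by
  open scoped MatrixOrder in
  obtain ⟨B, rfl⟩ := CStarAlgebra.nonneg_iff_eq_star_mul_self.mp hρ.nonneg
  rw [star_eq_conjTranspose, kronPow_mul, kronPow_conjTranspose]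
  exact posSemidef_conjTranspose_mul_self _

theorem trace_kronPow (A : Matrix (Fin N) (Fin N) ℂ) (n : ℕ) :
    (kronPow A n).trace = A.trace ^ n := by
  simp only [trace, diag, kronPow, ← Fin.prod_const, Finset.prod_univ_sum, Fintype.piFinset_univ]

theorem kronPow_one (n : ℕ) : kronPow (1 : Matrix (Fin N) (Fin N) ℂ) n = 1 := by
  ext x y
  simp [kronPow, one_apply, Finset.prod_boole, funext_iff]

theorem kronPow_smul (c : ℂ) (A : Matrix (Fin N) (Fin N) ℂ) (n : ℕ) :
    kronPow (c • A) n = c ^ n • kronPow A n := by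
  ext x y
  simp [kronPow, Finset.prod_mul_distrib]

theorem kronPow_mmix (n : ℕ) : kronPow (mmix (Fin N)) n = mmix (Fin n → Fin N) := by
  simp [mmix, kronPow_smul, kronPow_one, inv_pow]

theorem kronPow_one_eq_submatrix (A : Matrix (Fin N) (Fin N) ℂ) :
    kronPow A 1 =
      A.submatrix (Equiv.funUnique (Fin 1) (Fin N)) (Equiv.funUnique (Fin 1) (Fin N)) := by
  ext x y
  simp [kronPow]

end KronPow

/-- extension of n copies by n maximally mixed states. -/
theorem qscm_copies_mmix_le {N : ℕ} (hN : 2 ≤ N)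
    (ρ : Matrix (Fin N) (Fin N) ℂ) (hρ : ρ.PosSemidef) (htr : ρ.trace = 1)
    (n : ℕ) (hn : 1 ≤ n) :
    qscm (kronPow ρ n ⊗ₖ kronPow (mmix (Fin N)) n) ≤ (n : ℝ) * (qscm ρ / 2 + 1/2) := by
  have : Nontrivial (Fin N) := Fin.nontrivial_iff_two_le.mpr hN
  have : NeZero n := ⟨by omega⟩
  have hτ := hρ.kronPow n
  have hτtr : (kronPow ρ n).trace = 1 := by rw [trace_kronPow, htr, one_pow]
  rw [kronPow_mmix, qscm_kronecker_mmix_self hτ.1 hτtr]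
  have hD := diseq_le_one hτ hτtr
  have hC := qscm_nonneg hρ htr
  obtain rfl | hn2 := hn.eq_or_lt
  · have hC1 : qscm (kronPow ρ 1) = qscm ρ := by
      rw [kronPow_one_eq_submatrix, qscm_submatrix_equiv hρ.1]
    rw [hC1, Nat.cast_one]
    linarith
  · have hn2' : (2 : ℝ) ≤ n := by exact_mod_cast hn2
    have hCτ := qscm_le_one hτ hτtr
    nlinarith
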